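/- Let K be an infinite field of characteristic zero, and let n ≤ d be natural numbers. For permutations σ, τ ∈ S_n, the following are equivalent: (1) for every K-linear endomorphism A of K^d, Tr(L_σ^{(n)} ∘ A^{⊗n}) = Tr(L_τ^{(n)} ∘ A^{⊗n}); (2) σ and τ are conjugate in S_n. -/

import Mathlib

open scoped TensorProduct

/-- The endomorphism `L_σ^{(n)}` of the `n`-th tensor power of `V`, determined by
`v_1 ⊗ ⋯ ⊗ v_n ↦ v_{σ⁻¹(1)} ⊗ ⋯ ⊗ v_{σ⁻¹(n)}`. -/
noncomputable def permMap (K : Type*) [Field K] (V : Type*) [AddCommGroup V] [Module K V]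
    (n : ℕ) (σ : Equiv.Perm (Fin n)) :
    (⨂[K] _ : Fin n, V) →ₗ[K] ⨂[K] _ : Fin n, V :=
  (PiTensorProduct.reindex K (fun _ : Fin n => V) σ).toLinearMap

/-- The endomorphism `T^{⊗n}` of the `n`-th tensor power of `V` induced by `T : V →ₗ[K] V`. -/
noncomputable def tpowMap (K : Type*) [Field K] (V : Type*) [AddCommGroup V] [Module K V]
    (n : ℕ) (T : V →ₗ[K] V) :
    (⨂[K] _ : Fin n, V) →ₗ[K] ⨂[K] _ : Fin n, V :=
  PiTensorProduct.map fun _ => T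

/-! Conjugate permutations give the same trace function: `L_c` commutes with `A^{⊗n}` and the
trace is invariant under conjugation by `L_c`.

Conversely, test the trace on diagonal `A = diag x`. In the basis `e_g`, `g : Fin n → Fin d`, of
the tensor power, `L_σ ∘ A^{⊗n}` maps `e_g` to `(∏ i, x (g i)) • e_{g ∘ σ⁻¹}`, so the trace is the
sum of `∏ i, x (g i)` over the `σ`-invariant `g`, i.e. over the functions on the cycles of `σ`
(fixed points included); it equals `∏_c p_{|c|}(x)` with `p_k(x) = ∑ j, x j ^ k`. For
`x = (2, 1, …, 1, 0, …, 0)` with `m` ones this is `∏_c (2 ^ |c| + m)`, a monic polynomial in `m`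
of degree `#cycles ≤ n ≤ d` with roots `-2 ^ |c|`. Agreement at `m = 0, …, d - 1`, together with
`x = (1, …, 1)` for the number of cycles, identifies the multisets of cycle lengths, hence the
cycle types. -/

open Finset PiTensorProduct

section TensorPower

variable {K : Type*} [Field K] {V : Type*} [AddCommGroup V] [Module K V] {n : ℕ}

@[simp] lemma permMap_tprod (σ : Equiv.Perm (Fin n)) (v : Fin n → V) :
    permMap K V n σ (tprod K v) = tprod K (v ∘ σ.symm) :=
  reindex_tprod _ _

@[simp] lemma tpowMap_tprod (T : V →ₗ[K] V) (v : Fin n → V) :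
    tpowMap K V n T (tprod K v) = tprod K (T ∘ v) :=
  map_tprod _ _

lemma permMap_mul (σ τ : Equiv.Perm (Fin n)) :
    permMap K V n (σ * τ) = permMap K V n σ ∘ₗ permMap K V n τ := by
  rw [permMap, Equiv.Perm.mul_def, ← reindex_trans]
  rfl

lemma tpowMap_comp_permMap (T : V →ₗ[K] V) (σ : Equiv.Perm (Fin n)) :
    tpowMap K V n T ∘ₗ permMap K V n σ = permMap K V n σ ∘ₗ tpowMap K V n T :=
  map_comp_reindex_eq (fun _ => T) (σ : Fin n ≃ Fin n)

lemma trace_permMap_comp_tpowMap_of_isConj {σ τ : Equiv.Perm (Fin n)} (h : IsConj σ τ)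
    (T : V →ₗ[K] V) :
    LinearMap.trace K _ (permMap K V n σ ∘ₗ tpowMap K V n T) =
      LinearMap.trace K _ (permMap K V n τ ∘ₗ tpowMap K V n T) := by
  obtain ⟨c, rfl⟩ := isConj_iff.mp h
  let e := reindex K (fun _ : Fin n => V) c
  have hconj : e.conj (permMap K V n σ ∘ₗ tpowMap K V n T) =
      permMap K V n (c * σ * c⁻¹) ∘ₗ tpowMap K V n T := by
    have he : (e.symm : _ →ₗ[K] _) = permMap K V n c⁻¹ := by
      rw [reindex_symm]; rfl
    rw [LinearEquiv.conj_apply, he, permMap_mul, permMap_mul]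
    simp only [LinearMap.comp_assoc, tpowMap_comp_permMap]
    rfl
  rw [← hconj, LinearMap.trace_conj']

lemma trace_permMap_comp_tpowMap_of_basis {ι : Type*} [Fintype ι] [DecidableEq ι]
    (b : Module.Basis ι K V) {T : V →ₗ[K] V} {x : ι → K} (hT : ∀ j, T (b j) = x j • b j)
    (σ : Equiv.Perm (Fin n)) :
    LinearMap.trace K _ (permMap K V n σ ∘ₗ tpowMap K V n T) =
      ∑ g : Fin n → ι with g ∘ σ = g, ∏ i, x (g i) := by
  let B := Basis.piTensorProduct fun _ : Fin n => b
  have hB (g : Fin n → ι) :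
      (permMap K V n σ ∘ₗ tpowMap K V n T) (B g) = (∏ i, x (g i)) • B (g ∘ σ.symm) := by
    simp only [B, Basis.piTensorProduct_apply, LinearMap.comp_apply, tpowMap_tprod]
    rw [show T ∘ (fun i => b (g i)) = fun i => x (g i) • b (g i) from funext fun i => hT (g i),
      MultilinearMap.map_smul_univ, map_smul, permMap_tprod]
    rfl
  rw [LinearMap.trace_eq_matrix_trace K B, Matrix.trace, sum_filter]
  refine sum_congr rfl fun g _ => ?_
  rw [Matrix.diag_apply, LinearMap.toMatrix_apply, hB, map_smul, Module.Basis.repr_self,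
    Finsupp.smul_apply, Finsupp.single_apply, smul_eq_mul, mul_ite, mul_one, mul_zero]
  exact if_congr (by rw [Equiv.comp_symm_eq, eq_comm]) rfl rfl

end TensorPower

namespace Equiv.Perm

variable {α : Type*} (σ : Perm α)

/-- The cycles of `σ`, fixed points counting as cycles of length one. -/
abbrev Cycles : Type _ := Quotient (SameCycle.setoid σ)

variable {σ} in
lemma Cycles.mk_eq_mk_iff {a b : α} : (⟦a⟧ : σ.Cycles) = ⟦b⟧ ↔ σ.SameCycle a b :=
  Quotient.eq

variable {σ} in
lemma SameCycle.apply_eq_of_comp_eq [Finite α] {β : Type*} {g : α → β} (hg : g ∘ σ = g)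
    {a b : α} (h : σ.SameCycle a b) : g a = g b := by
  suffices ∀ i : ℕ, g ((σ ^ i) a) = g a by
    obtain ⟨i, -, rfl⟩ := h.exists_pow_eq'
    exact (this i).symm
  intro i
  induction i with
  | zero => rfl
  | succ i ih =>
    rw [pow_succ', mul_apply]
    exact (congrFun hg _).trans ih

variable [Fintype α] [DecidableEq α]

instance : DecidableRel (SameCycle.setoid σ).r := inferInstanceAs (DecidableRel σ.SameCycle)

def cycleSize (q : σ.Cycles) : ℕ := #{a | ⟦a⟧ = q}

def cycleSizes : Multiset ℕ := univ.val.map σ.cycleSize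

variable {σ}

/-- This is `1` on the cycles of length one, hence injective only on the longer cycles. -/
def Cycles.cycleOf : σ.Cycles → Perm α :=
  Quotient.lift σ.cycleOf fun _ _ h => h.cycleOf_eq

lemma cycleSize_mk_of_apply_ne {a : α} (ha : σ a ≠ a) :
    σ.cycleSize ⟦a⟧ = #(σ.cycleOf a).support := by
  refine congrArg card (Finset.ext fun b => ?_)
  rw [mem_filter, Cycles.mk_eq_mk_iff, mem_support_cycleOf_iff, sameCycle_comm]
  simp [ha]

lemma cycleSize_mk_of_apply_eq {a : α} (ha : σ a = a) : σ.cycleSize ⟦a⟧ = 1 := by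
  rw [cycleSize, card_eq_one]
  refine ⟨a, Finset.ext fun b => ?_⟩
  simp only [mem_filter, mem_univ, true_and, Cycles.mk_eq_mk_iff, mem_singleton]
  exact ⟨fun h => h.eq_of_right ha, fun h => h ▸ SameCycle.refl σ b⟩

lemma two_le_cycleSize_mk_iff {a : α} : 2 ≤ σ.cycleSize ⟦a⟧ ↔ σ a ≠ a := by
  by_cases ha : σ a = a
  · simp [cycleSize_mk_of_apply_eq ha, ha]
  · simp [cycleSize_mk_of_apply_ne ha, two_le_card_support_cycleOf_iff, ha]

lemma pos_of_mem_cycleSizes {k : ℕ} (hk : k ∈ σ.cycleSizes) : 0 < k := by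
  obtain ⟨q, -, rfl⟩ := Multiset.mem_map.mp hk
  obtain ⟨a, rfl⟩ := q.exists_rep
  exact card_pos.mpr ⟨a, mem_filter.mpr ⟨mem_univ a, rfl⟩⟩

lemma card_cycleSizes_le : Multiset.card σ.cycleSizes ≤ Fintype.card α := by
  simpa [cycleSizes] using Fintype.card_quotient_le _

lemma cycleFactorsFinset_eq_image :
    σ.cycleFactorsFinset = Finset.image Cycles.cycleOf {q : σ.Cycles | 2 ≤ σ.cycleSize q} := by
  ext c
  simp only [mem_image, mem_filter, mem_univ, true_and]
  constructor
  · intro hc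
    obtain ⟨a, ha⟩ := (mem_cycleFactorsFinset_iff.mp hc).1.nonempty_support
    refine ⟨⟦a⟧, two_le_cycleSize_mk_iff.mpr ?_, (cycle_is_cycleOf ha hc).symm⟩
    exact mem_support.mp (mem_cycleFactorsFinset_support_le hc ha)
  · rintro ⟨q, hq, rfl⟩
    obtain ⟨a, rfl⟩ := q.exists_rep
    exact cycleOf_mem_cycleFactorsFinset_iff.mpr
      (mem_support.mpr (two_le_cycleSize_mk_iff.mp hq))

lemma filter_cycleSizes_eq_cycleType : σ.cycleSizes.filter (2 ≤ ·) = σ.cycleType := by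
  have hinj : Set.InjOn Cycles.cycleOf
      (({q : σ.Cycles | 2 ≤ σ.cycleSize q} : Finset σ.Cycles) : Set σ.Cycles) := by
    intro q hq q' _ h
    obtain ⟨a, rfl⟩ := q.exists_rep
    obtain ⟨a', rfl⟩ := q'.exists_rep
    have ha : a ∈ (σ.cycleOf a').support := by
      rw [← show σ.cycleOf a = σ.cycleOf a' from h, mem_support_cycleOf_iff]
      exact ⟨SameCycle.refl σ a,
        mem_support.mpr (two_le_cycleSize_mk_iff.mp (by simpa using hq))⟩
    exact Cycles.mk_eq_mk_iff.mpr (mem_support_cycleOf_iff.mp ha).1.symm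
  rw [cycleType_def, cycleFactorsFinset_eq_image, image_val_of_injOn hinj, cycleSizes,
    Multiset.filter_map, Multiset.map_map]
  refine Multiset.map_congr rfl fun q hq => ?_
  obtain ⟨a, rfl⟩ := q.exists_rep
  exact cycleSize_mk_of_apply_ne (two_le_cycleSize_mk_iff.mp (Multiset.mem_filter.mp hq).2)

lemma sum_prod_of_comp_eq {ι R : Type*} [Fintype ι] [DecidableEq ι] [CommSemiring R]
    (x : ι → R) :
    ∑ g : α → ι with g ∘ σ = g, ∏ a, x (g a) = (σ.cycleSizes.map fun k => ∑ j, x j ^ k).prod := by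
  have hinv : ({g : α → ι | g ∘ σ = g} : Finset _) =
      univ.image fun h : σ.Cycles → ι => h ∘ Quotient.mk _ := by
    ext g
    simp only [mem_filter, mem_univ, true_and, mem_image]
    constructor
    · exact fun hg => ⟨Quotient.lift g fun _ _ => SameCycle.apply_eq_of_comp_eq hg, rfl⟩
    · rintro ⟨h, rfl⟩
      exact funext fun a => congrArg h (Cycles.mk_eq_mk_iff.mpr (sameCycle_apply_left.mpr
        (SameCycle.refl σ a)))
  have hprod (h : σ.Cycles → ι) : ∏ a, x (h ⟦a⟧) = ∏ q, x (h q) ^ σ.cycleSize q := by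
    have := Finset.prod_comp (s := univ) (x ∘ h) (Quotient.mk (SameCycle.setoid σ))
    rwa [image_univ_of_surjective Quotient.mk_surjective] at this
  rw [hinv, sum_image fun _ _ _ _ h => Quotient.mk_surjective.injective_comp_right h,
    cycleSizes, Multiset.map_map, prod_map_val]
  simp only [Function.comp_apply, Fintype.prod_sum]
  exact sum_congr rfl fun h _ => hprod h

end Equiv.Perm

open Polynomial in
lemma Multiset.eq_of_prod_map_sub_eq {K : Type*} [Field K] {s t : Multiset K} (S : Finset K)
    (hcard : card s = card t) (hS : card s ≤ #S)
    (h : ∀ y ∈ S, (s.map (y - ·)).prod = (t.map (y - ·)).prod) : s = t := by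
  let P (u : Multiset K) : K[X] := (u.map fun a => X - C a).prod
  have hmonic (u : Multiset K) : (P u).Monic :=
    monic_multiset_prod_of_monic _ _ fun a _ => monic_X_sub_C a
  have hdeg (u : Multiset K) : (P u).degree = card u := by
    rw [degree_eq_natDegree (hmonic u).ne_zero, natDegree_multiset_prod_X_sub_C_eq_card]
  have hP : P s = P t := by
    refine eq_of_degree_sub_lt_of_eval_finset_eq S ?_ fun y hy => ?_
    · calc (P s - P t).degree < (P s).degree :=
            degree_sub_lt_left (by rw [hdeg, hdeg, hcard]) (hmonic s).ne_zero
              (by rw [(hmonic s).leadingCoeff, (hmonic t).leadingCoeff])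
        _ ≤ #S := by rw [hdeg]; exact_mod_cast hS
    · simpa [P, eval_multiset_prod] using h y hy
  simpa [P] using congrArg roots hP

lemma Multiset.eq_of_prod_map_two_pow_add_eq (K : Type*) [Field K] [CharZero K]
    {s t : Multiset ℕ} {d : ℕ} (hcard : card s = card t) (hd : card s ≤ d)
    (h : ∀ m < d, (s.map fun k => (2 : K) ^ k + m).prod = (t.map fun k => (2 : K) ^ k + m).prod) :
    s = t := by
  have hinj : Function.Injective fun k : ℕ => -(2 : K) ^ k := by
    intro a b hab
    have : ((2 ^ a : ℕ) : K) = ((2 ^ b : ℕ) : K) := by push_cast; exact neg_inj.mp hab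
    exact Nat.pow_right_injective le_rfl (Nat.cast_injective this)
  refine map_injective hinj
    (eq_of_prod_map_sub_eq ((Finset.range d).map Nat.castEmbedding) ?_ ?_ ?_)
  · simpa using hcard
  · simpa using hd
  · simp only [Finset.mem_map, Finset.mem_range]
    rintro _ ⟨m, hm, rfl⟩
    simpa [map_map, add_comm] using h m hm

lemma sum_pow_cons_indicator {K : Type*} [Field K] {d m k : ℕ} (hm : m ≤ d) (hk : k ≠ 0)
    (y : K) :
    ∑ j, (Fin.cons y fun j : Fin d => if (j : ℕ) < m then 1 else 0 : Fin (d + 1) → K) j ^ k =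
      y ^ k + m := by
  simp [Fin.sum_univ_succ, ite_pow, zero_pow hk, Fin.card_filter_val_lt, hm]

lemma trace_permMap_comp_tpowMap_diagonal {K : Type*} [Field K] {ι : Type*} [Fintype ι]
    [DecidableEq ι] {n : ℕ} (σ : Equiv.Perm (Fin n)) (x : ι → K) :
    LinearMap.trace K _
        (permMap K (ι → K) n σ ∘ₗ tpowMap K (ι → K) n (Matrix.diagonal x).toLin') =
      (σ.cycleSizes.map fun k => ∑ j, x j ^ k).prod := by
  rw [trace_permMap_comp_tpowMap_of_basis (Pi.basisFun K ι) (x := x) fun j => ?_,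
    Equiv.Perm.sum_prod_of_comp_eq]
  ext i
  by_cases h : i = j <;> simp [h]

theorem stmt8_general (K : Type*) [Field K] [CharZero K] (n d : ℕ) (hnd : n ≤ d)
    (σ τ : Equiv.Perm (Fin n)) :
    (∀ A : (Fin d → K) →ₗ[K] (Fin d → K),
        LinearMap.trace K (⨂[K] _ : Fin n, (Fin d → K))
            (permMap K (Fin d → K) n σ ∘ₗ tpowMap K (Fin d → K) n A) =
          LinearMap.trace K (⨂[K] _ : Fin n, (Fin d → K))
            (permMap K (Fin d → K) n τ ∘ₗ tpowMap K (Fin d → K) n A)) ↔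
      IsConj σ τ := by
  refine ⟨fun h => ?_, fun h A => trace_permMap_comp_tpowMap_of_isConj h A⟩
  rcases lt_or_ge n 2 with hn | hn
  · have : Subsingleton (Fin n) := Fin.subsingleton_iff_le_one.mpr (by omega)
    rw [Subsingleton.elim σ τ]
  have hdiag (x : Fin d → K) := by
    simpa only [trace_permMap_comp_tpowMap_diagonal] using h (Matrix.diagonal x).toLin'
  obtain ⟨d, rfl⟩ : ∃ d', d = d' + 1 := ⟨d - 1, by omega⟩
  have hcard : Multiset.card σ.cycleSizes = Multiset.card τ.cycleSizes := by
    have h1 := hdiag 1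
    simp only [Pi.one_apply, one_pow, sum_const, card_univ, Fintype.card_fin, nsmul_eq_mul,
      mul_one, Multiset.map_const', Multiset.prod_replicate] at h1
    exact Nat.pow_right_injective (a := d + 1) (by omega) (by exact_mod_cast h1)
  rw [Equiv.Perm.isConj_iff_cycleType_eq, ← Equiv.Perm.filter_cycleSizes_eq_cycleType,
    ← Equiv.Perm.filter_cycleSizes_eq_cycleType, Multiset.eq_of_prod_map_two_pow_add_eq K hcard
      (Equiv.Perm.card_cycleSizes_le.trans (by simpa using hnd)) fun m hm => ?_]
  have h2 := hdiag (Fin.cons 2 fun j : Fin d => if (j : ℕ) < m then 1 else 0)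
  rwa [Multiset.map_congr rfl fun k hk => sum_pow_cons_indicator (by omega)
      (Equiv.Perm.pos_of_mem_cycleSizes hk).ne' 2,
    Multiset.map_congr rfl fun k hk => sum_pow_cons_indicator (by omega)
      (Equiv.Perm.pos_of_mem_cycleSizes hk).ne' 2] at h2

/-- for `n ≤ d` and `σ, τ ∈ S_n`, the trace functions
`A ↦ Tr(L_σ^{(n)} ∘ A^{⊗n})` and `A ↦ Tr(L_τ^{(n)} ∘ A^{⊗n})` on `End_K(K^d)` coincide
if and only if `σ` and `τ` are conjugate in `S_n`. -/
theorem stmt8 (K : Type*) [Field K] [Infinite K] [CharZero K] (n d : ℕ) (hnd : n ≤ d)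
    (σ τ : Equiv.Perm (Fin n)) :
    (∀ A : (Fin d → K) →ₗ[K] (Fin d → K),
        LinearMap.trace K (⨂[K] _ : Fin n, (Fin d → K))
            (permMap K (Fin d → K) n σ ∘ₗ tpowMap K (Fin d → K) n A) =
          LinearMap.trace K (⨂[K] _ : Fin n, (Fin d → K))
            (permMap K (Fin d → K) n τ ∘ₗ tpowMap K (Fin d → K) n A)) ↔
      IsConj σ τ :=
  stmt8_general K n d hnd σ τ
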